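/- arXiv:2512.10716 — 2 statements merged into one kernel-verified Lean document; each statement's English description precedes it below -/
import Mathlib

section
/- Define the NSFD update for the fourth component: u₄⁺ = (u₄ + c·Δt·m̂·u₄ + Δt·λ_M)/(1 + Δt(c·u₄ + σ)), where c = α₁u₁/(1+α₂u₁). If u₁ ≥ 0, 0 ≤ u₄ ≤ m̂, Δt > 0, and σ·m̂ ≥ λ_M ≥ 0, then 0 ≤ u₄⁺ ≤ m̂. -/
theorem nsfd_u4_invariant
    (α₁ α₂ σ mhat lamM Δt u₁ u₄ : ℝ)
    (hα₁ : 0 < α₁) (hα₂ : 0 < α₂) (hσ : 0 < σ) (hm : 0 < mhat)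
    (hlamM : 0 ≤ lamM) (hσm : lamM ≤ σ * mhat) (hΔt : 0 < Δt)
    (hu₁ : 0 ≤ u₁) (hu₄0 : 0 ≤ u₄) (hu₄ : u₄ ≤ mhat) :
    0 ≤ (u₄ + (α₁ * u₁ / (1 + α₂ * u₁)) * Δt * mhat * u₄ + Δt * lamM) /
        (1 + Δt * ((α₁ * u₁ / (1 + α₂ * u₁)) * u₄ + σ)) ∧
    (u₄ + (α₁ * u₁ / (1 + α₂ * u₁)) * Δt * mhat * u₄ + Δt * lamM) /
        (1 + Δt * ((α₁ * u₁ / (1 + α₂ * u₁)) * u₄ + σ)) ≤ mhat := by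
  set c := α₁ * u₁ / (1 + α₂ * u₁) with hc
  have hc0 : 0 ≤ c := by
    apply div_nonneg (by positivity)
    nlinarith
  have hD : 0 < 1 + Δt * (c * u₄ + σ) := by nlinarith [mul_nonneg hc0 hu₄0]
  constructor
  · apply div_nonneg _ hD.le
    have : 0 ≤ c * Δt * mhat * u₄ := by positivity
    nlinarith
  · rw [div_le_iff₀ hD]
    nlinarith [mul_nonneg (mul_nonneg hc0 hΔt.le) (mul_nonneg hm.le hu₄0)]
end

section
/- Define the NSFD updates u₁⁺ = (u₁ + Δt·r₁·u₃²)/(1 + Δt(γ(u₄)+τ₀)), u₂⁺ = (u₂ + Δt·γ(u₄)·u₁)/(1 + Δt·τ_p), u₃⁺ = (u₃ + Δt·τ_S·u₅/(1+C·u₁^ν))/(1 + Δt(d + r₂u₁ + r₁u₃)), u₅⁺ = (u₅ + Δt·(τ₁u₁/(1+τ₂u₁))·u₄)/(1 + Δt·τ₃). If (u₁,…,u₅) lies in the rectangle R = [0,β₁]×[0,β₂]×[0,β₃]×[0,β₄]×[0,β₅] (with the β's as in the invariant-rectangle definition and γ_min ≤ γ ≤ γ_max), then u_i⁺ ∈ [0,β_i]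 for i = 1,2,3,5, for every Δt > 0. -/
set_option maxHeartbeats 1000000


theorem nsfd_invariant_rectangle
    (r₁ r₂ d τ₀ τp τS τ₁ τ₂ τ₃ C ν mhat γmin γmax : ℝ) (γ : ℝ → ℝ)
    (hr₁ : 0 < r₁) (hr₂ : 0 < r₂) (hd : 0 < d) (hτ₀ : 0 ≤ τ₀)
    (hτp : 0 < τp) (hτS : 0 < τS) (hτ₁ : 0 < τ₁) (hτ₂ : 0 < τ₂)
    (hτ₃ : 0 < τ₃) (hC : 0 ≤ C) (hν : 0 ≤ ν) (hm : 0 < mhat)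
    (hγmin : 0 < γmin)
    (hγ : ∀ s : ℝ, 0 ≤ s → γmin ≤ γ s ∧ γ s ≤ γmax)
    (β₁ β₂ β₃ β₄ β₅ : ℝ)
    (hβ₄ : β₄ = mhat) (hβ₅ : β₅ = τ₁ * mhat / (τ₂ * τ₃))
    (hβ₃ : β₃ = τS * β₅ / d) (hβ₁ : β₁ = r₁ * β₃ ^ 2 / (τ₀ + γmin))
    (hβ₂ : β₂ = γmax * β₁ / τp)
    (Δt : ℝ) (hΔt : 0 < Δt)
    (u₁ u₂ u₃ u₄ u₅ : ℝ)
    (h₁ : u₁ ∈ Set.Icc 0 β₁) (h₂ : u₂ ∈ Set.Icc 0 β₂)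
    (h₃ : u₃ ∈ Set.Icc 0 β₃) (h₄ : u₄ ∈ Set.Icc 0 β₄)
    (h₅ : u₅ ∈ Set.Icc 0 β₅) :
    (u₁ + Δt * r₁ * u₃ ^ 2) / (1 + Δt * (γ u₄ + τ₀)) ∈ Set.Icc 0 β₁ ∧
    (u₂ + Δt * γ u₄ * u₁) / (1 + Δt * τp) ∈ Set.Icc 0 β₂ ∧
    (u₃ + Δt * τS * u₅ / (1 + C * u₁ ^ ν)) / (1 + Δt * (d + r₂ * u₁ + r₁ * u₃))
      ∈ Set.Icc 0 β₃ ∧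
    (u₅ + Δt * (τ₁ * u₁ / (1 + τ₂ * u₁)) * u₄) / (1 + Δt * τ₃) ∈ Set.Icc 0 β₅ := by
  obtain ⟨h₁l, h₁r⟩ := h₁
  obtain ⟨h₂l, h₂r⟩ := h₂
  obtain ⟨h₃l, h₃r⟩ := h₃
  obtain ⟨h₄l, h₄r⟩ := h₄
  obtain ⟨h₅l, h₅r⟩ := h₅
  obtain ⟨hγ1, hγ2⟩ := hγ u₄ h₄l
  have hγpos : 0 < γ u₄ := lt_of_lt_of_le hγmin hγ1
  have hγmaxpos : 0 < γmax := lt_of_lt_of_le hγpos hγ2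
  have hβ₅pos : 0 < β₅ := by rw [hβ₅]; positivity
  have hβ₃pos : 0 < β₃ := by rw [hβ₃]; positivity
  have hβ₁pos : 0 < β₁ := by rw [hβ₁]; positivity
  have hβ₂pos : 0 < β₂ := by rw [hβ₂]; positivity
  have hpow : (0:ℝ) ≤ u₁ ^ ν := Real.rpow_nonneg h₁l ν
  have hden3 : (0:ℝ) < 1 + C * u₁ ^ ν := by positivity
  have key1 : r₁ * β₃ ^ 2 = β₁ * (τ₀ + γmin) := by
    rw [hβ₁]; field_simp
  have key3 : τS * β₅ = β₃ * d := by
    rw [hβ₃]; field_simp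
  have key5 : τ₁ * mhat / τ₂ = β₅ * τ₃ := by
    rw [hβ₅]; field_simp
  refine ⟨⟨?_, ?_⟩, ⟨?_, ?_⟩, ⟨?_, ?_⟩, ⟨?_, ?_⟩⟩
  · apply div_nonneg (by positivity) (by positivity)
  · rw [div_le_iff₀ (by positivity)]
    have h1 : r₁ * u₃ ^ 2 ≤ β₁ * (τ₀ + γ u₄) := by
      calc r₁ * u₃ ^ 2 ≤ r₁ * β₃ ^ 2 := mul_le_mul_of_nonneg_left (pow_le_pow_left₀ h₃l h₃r 2) hr₁.le
        _ = β₁ * (τ₀ + γmin) := key1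
        _ ≤ β₁ * (τ₀ + γ u₄) := by nlinarith
    nlinarith
  · apply div_nonneg (by positivity) (by positivity)
  · rw [div_le_iff₀ (by positivity)]
    have h1 : γ u₄ * u₁ ≤ γmax * β₁ := by nlinarith
    have h2 : γmax * β₁ = β₂ * τp := by rw [hβ₂]; field_simp
    nlinarith
  · apply div_nonneg (by positivity) (by positivity)
  · rw [div_le_iff₀ (by positivity)]
    have h1 : τS * u₅ / (1 + C * u₁ ^ ν) ≤ β₃ * d := by
      rw [div_le_iff₀ hden3]
      nlinarith [mul_le_mul_of_nonneg_left h₅r hτS.le,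
        mul_nonneg (mul_nonneg (mul_nonneg hβ₃pos.le hd.le) hC) hpow]
    have h1' : Δt * τS * u₅ / (1 + C * u₁ ^ ν) ≤ Δt * (β₃ * d) := by
      rw [mul_assoc, mul_div_assoc]
      exact mul_le_mul_of_nonneg_left h1 hΔt.le
    nlinarith [mul_nonneg (mul_nonneg (mul_nonneg hβ₃pos.le hΔt.le) hr₂.le) h₁l,
      mul_nonneg (mul_nonneg (mul_nonneg hβ₃pos.le hΔt.le) hr₁.le) h₃l]
  · apply div_nonneg (by positivity) (by positivity)
  · rw [div_le_iff₀ (by positivity)]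
    have hden5 : (0:ℝ) < 1 + τ₂ * u₁ := by positivity
    have h1 : τ₁ * u₁ / (1 + τ₂ * u₁) * u₄ ≤ β₅ * τ₃ := by
      rw [← key5]
      have h2 : τ₁ * u₁ / (1 + τ₂ * u₁) ≤ τ₁ / τ₂ := by
        rw [div_le_div_iff₀ hden5 hτ₂]
        nlinarith
      calc τ₁ * u₁ / (1 + τ₂ * u₁) * u₄ ≤ τ₁ / τ₂ * u₄ := by
            apply mul_le_mul_of_nonneg_right h2 h₄l
        _ ≤ τ₁ / τ₂ * mhat := by
            apply mul_le_mul_of_nonneg_left (hβ₄ ▸ h₄r) (by positivity)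
        _ = τ₁ * mhat / τ₂ := by ring
    nlinarith
end
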